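/- arXiv:1011.5695 — 2 statements merged into one kernel-verified Lean document; each statement's English description precedes it below -/
import Mathlib

section
/- Fix n ≥ 1 and J ∈ ℕ, and families (Â₁,_m), (Â₀,_m), (B̂₀,_m) of n×n complex matrices with ℬ₀,J invertible, in the notation below. Then the function λ ↦ D_J(λ) := det(I − 𝒦_J(λ))·exp(tr 𝒦_J(λ)) is analytic on all of ℂ, and for every λ₀ ∈ ℂ, the order of vanishing of D_J at λ₀ equals the algebraic multiplicity of λ₀ as an eigenvalue of the matrix L_J, i.e., equals the root multiplicity of λ₀ in the characteristic polynomial of L_J. -/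
open Complex Matrix

def jv (J : ℕ) (a : Fin (2 * J + 1)) : ℤ := ((a : ℕ) : ℤ) - (J : ℤ)

def blockToeplitz (J n : ℕ) (A : ℤ → Matrix (Fin n) (Fin n) ℂ) :
    Matrix (Fin (2 * J + 1) × Fin n) (Fin (2 * J + 1) × Fin n) ℂ :=
  fun p q => A (jv J p.1 - jv J q.1) p.2 q.2

noncomputable def fourierD (J n : ℕ) :
    Matrix (Fin (2 * J + 1) × Fin n) (Fin (2 * J + 1) × Fin n) ℂ :=
  Matrix.diagonal fun p => Complex.I * ((jv J p.1 : ℤ) : ℂ)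

noncomputable def KJ (J n : ℕ) (A1 A0 B0 : ℤ → Matrix (Fin n) (Fin n) ℂ) (lam : ℂ) :
    Matrix (Fin (2 * J + 1) × Fin n) (Fin (2 * J + 1) × Fin n) ℂ :=
  -(((fourierD J n) ^ 2 - 1)⁻¹ *
    (fourierD J n * blockToeplitz J n A1 +
      (blockToeplitz J n A0 - lam • blockToeplitz J n B0) + 1))

/-- The truncated Birman–Schwinger Evans function `D_J(λ) = det(I−𝒦_J(λ)) e^{tr 𝒦_J(λ)}`. -/
noncomputable def DJ (J n : ℕ) (A1 A0 B0 : ℤ → Matrix (Fin n) (Fin n) ℂ) (lam : ℂ) : ℂ :=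
  (1 - KJ J n A1 A0 B0 lam).det * Complex.exp ((KJ J n A1 A0 B0 lam).trace)

/-! Since `𝒟_J² − I` is diagonal with entries `−(j² + 1) ≠ 0` and
`(𝒟_J² − I) + 𝒟_J𝒜₁,J + ℬ_J(λ) + I = ℬ₀,J (L_J − λ)`, one has
`I − 𝒦_J(λ) = (𝒟_J² − I)⁻¹ ℬ₀,J (L_J − λ)`, so `det (I − 𝒦_J(λ))` is a nonzero constant times the
characteristic polynomial of `L_J` evaluated at `λ`. As `𝒦_J(λ)` is affine in `λ`, the factor
`exp (tr 𝒦_J(λ))` is entire and zero-free, and the order of vanishing of `D_J` at `λ₀` is that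
of the characteristic polynomial, i.e. the root multiplicity. -/

namespace Polynomial

variable {𝕜 : Type*} [NontriviallyNormedField 𝕜]

theorem analyticAt_eval (p : 𝕜[X]) (z : 𝕜) : AnalyticAt 𝕜 (eval · p) z :=
  AnalyticOnNhd.eval_polynomial p z trivial

theorem analyticOrderAt_eval {p : 𝕜[X]} (hp : p ≠ 0) (z₀ : 𝕜) :
    analyticOrderAt (eval · p) z₀ = p.rootMultiplicity z₀ := by
  rw [(p.analyticAt_eval z₀).analyticOrderAt_eq_natCast]
  refine ⟨(eval · (p /ₘ (X - C z₀) ^ p.rootMultiplicity z₀)), analyticAt_eval _ _,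
    eval_divByMonic_pow_rootMultiplicity_ne_zero z₀ hp, Filter.Eventually.of_forall fun z => ?_⟩
  conv_lhs => rw [← p.pow_mul_divByMonic_rootMultiplicity_eq z₀]
  simp

end Polynomial

theorem analyticOrderAt_mul_eq_left_of_ne_zero {𝕜 : Type*} [NontriviallyNormedField 𝕜]
    {f g : 𝕜 → 𝕜} {z₀ : 𝕜} (hf : AnalyticAt 𝕜 f z₀) (hg : AnalyticAt 𝕜 g z₀) (hg₀ : g z₀ ≠ 0) :
    analyticOrderAt (f * g) z₀ = analyticOrderAt f z₀ := by
  rw [analyticOrderAt_mul hf hg, hg.analyticOrderAt_eq_zero.2 hg₀, add_zero]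

section Hill

variable (J n : ℕ) (A1 A0 B0 : ℤ → Matrix (Fin n) (Fin n) ℂ)

noncomputable def hillMatrix : Matrix (Fin (2 * J + 1) × Fin n) (Fin (2 * J + 1) × Fin n) ℂ :=
  (blockToeplitz J n B0)⁻¹ *
    ((fourierD J n) ^ 2 + fourierD J n * blockToeplitz J n A1 + blockToeplitz J n A0)

theorem fourierD_sq_sub_one :
    fourierD J n ^ 2 - 1 = diagonal fun p => -((jv J p.1 : ℂ) ^ 2 + 1) := by
  rw [fourierD, sq, diagonal_mul_diagonal, ← diagonal_one, diagonal_sub]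
  congr 1
  ext p
  linear_combination (jv J p.1 : ℂ) ^ 2 * I_sq

theorem isUnit_det_fourierD_sq_sub_one : IsUnit (fourierD J n ^ 2 - 1).det := by
  rw [fourierD_sq_sub_one, det_diagonal, isUnit_iff_ne_zero, Finset.prod_ne_zero_iff]
  intro p _
  rw [neg_ne_zero]
  exact_mod_cast (by positivity : (jv J p.1) ^ 2 + 1 ≠ 0)

theorem KJ_eq_add_smul (lam : ℂ) :
    KJ J n A1 A0 B0 lam =
      KJ J n A1 A0 B0 0 + lam • ((fourierD J n ^ 2 - 1)⁻¹ * blockToeplitz J n B0) := by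
  simp only [KJ, zero_smul, sub_zero, Matrix.mul_add, Matrix.mul_sub, Matrix.mul_smul]
  abel

theorem analyticAt_trace_KJ (z : ℂ) :
    AnalyticAt ℂ (fun lam => (KJ J n A1 A0 B0 lam).trace) z := by
  have h_affine (lam : ℂ) : (KJ J n A1 A0 B0 lam).trace = (KJ J n A1 A0 B0 0).trace +
      lam * ((fourierD J n ^ 2 - 1)⁻¹ * blockToeplitz J n B0).trace := by
    rw [KJ_eq_add_smul, trace_add, trace_smul, smul_eq_mul]
  rw [funext h_affine]
  fun_prop

variable {J n A1 A0 B0}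

theorem one_sub_KJ_eq (hB : IsUnit (blockToeplitz J n B0)) (lam : ℂ) :
    1 - KJ J n A1 A0 B0 lam = -(((fourierD J n ^ 2 - 1)⁻¹ * blockToeplitz J n B0) *
      (lam • 1 - hillMatrix J n A1 A0 B0)) := by
  have hE := isUnit_det_fourierD_sq_sub_one J n
  have hBL : blockToeplitz J n B0 * hillMatrix J n A1 A0 B0 =
      fourierD J n ^ 2 + fourierD J n * blockToeplitz J n A1 + blockToeplitz J n A0 := by
    rw [hillMatrix, ← Matrix.mul_assoc, mul_nonsing_inv _ ((isUnit_iff_isUnit_det _).mp hB),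
      Matrix.one_mul]
  rw [Matrix.mul_assoc, Matrix.mul_sub, hBL, Matrix.mul_smul, Matrix.mul_one, ← Matrix.mul_neg,
    neg_sub, KJ, sub_neg_eq_add]
  nth_rw 1 [← nonsing_inv_mul _ hE]
  rw [← Matrix.mul_add]
  congr 1
  abel

theorem det_one_sub_KJ (hB : IsUnit (blockToeplitz J n B0)) (lam : ℂ) :
    (1 - KJ J n A1 A0 B0 lam).det =
      (-1) ^ Fintype.card (Fin (2 * J + 1) × Fin n) *
        ((fourierD J n ^ 2 - 1)⁻¹ * blockToeplitz J n B0).det *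
          (hillMatrix J n A1 A0 B0).charpoly.eval lam := by
  rw [one_sub_KJ_eq hB, det_neg, det_mul _ (lam • 1 - _), eval_charpoly, scalar_apply,
    smul_one_eq_diagonal, mul_assoc]

theorem DJ_eq_eval_charpoly_mul (hB : IsUnit (blockToeplitz J n B0)) :
    ∃ g : ℂ → ℂ, (∀ z, AnalyticAt ℂ g z ∧ g z ≠ 0) ∧
      DJ J n A1 A0 B0 = (fun lam => (hillMatrix J n A1 A0 B0).charpoly.eval lam) * g := by
  set c : ℂ := (-1) ^ Fintype.card (Fin (2 * J + 1) × Fin n) *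
    ((fourierD J n ^ 2 - 1)⁻¹ * blockToeplitz J n B0).det
  have hc : c ≠ 0 := by
    refine mul_ne_zero (pow_ne_zero _ (neg_ne_zero.2 one_ne_zero)) ?_
    rw [det_mul]
    exact mul_ne_zero (isUnit_nonsing_inv_det _ (isUnit_det_fourierD_sq_sub_one J n)).ne_zero
      ((isUnit_iff_isUnit_det _).mp hB).ne_zero
  refine ⟨fun lam => c * exp (KJ J n A1 A0 B0 lam).trace, fun z =>
    ⟨analyticAt_const.mul (analyticAt_trace_KJ J n A1 A0 B0 z).cexp,
      mul_ne_zero hc (exp_ne_zero _)⟩, funext fun lam => ?_⟩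
  rw [Pi.mul_apply, DJ, det_one_sub_KJ hB]
  ring

end Hill

theorem truncated_evans_analytic_and_multiplicity_general
    (n : ℕ) (J : ℕ)
    (A1 A0 B0 : ℤ → Matrix (Fin n) (Fin n) ℂ)
    (hB : IsUnit (blockToeplitz J n B0))
    (LJ : Matrix (Fin (2 * J + 1) × Fin n) (Fin (2 * J + 1) × Fin n) ℂ)
    (hLJ : LJ = (blockToeplitz J n B0)⁻¹ *
      ((fourierD J n) ^ 2 + fourierD J n * blockToeplitz J n A1 + blockToeplitz J n A0)) :
    ∃ h : ∀ z : ℂ, AnalyticAt ℂ (DJ J n A1 A0 B0) z,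
      ∀ z₀ : ℂ, analyticOrderAt (DJ J n A1 A0 B0) z₀ = ((LJ.charpoly.rootMultiplicity z₀ : ℕ) : ℕ∞) := by
  obtain rfl : LJ = hillMatrix J n A1 A0 B0 := hLJ
  obtain ⟨g, hg, hDJ⟩ := DJ_eq_eval_charpoly_mul hB
  have hχ (z : ℂ) := Polynomial.analyticAt_eval (hillMatrix J n A1 A0 B0).charpoly z
  refine ⟨fun z => hDJ ▸ (hχ z).mul (hg z).1, fun z₀ => ?_⟩
  rw [hDJ, analyticOrderAt_mul_eq_left_of_ne_zero (hχ z₀) (hg z₀).1 (hg z₀).2,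
    Polynomial.analyticOrderAt_eval (charpoly_monic _).ne_zero]

/-- `D_J` is entire, and its order of vanishing at any `z₀` equals
the algebraic multiplicity of `z₀` as an eigenvalue of the Hill matrix `L_J`,
i.e. the root multiplicity of `z₀` in the characteristic polynomial of `L_J`. -/
theorem truncated_evans_analytic_and_multiplicity
    (n : ℕ) (hn : 1 ≤ n) (J : ℕ)
    (A1 A0 B0 : ℤ → Matrix (Fin n) (Fin n) ℂ)
    (hB : IsUnit (blockToeplitz J n B0))
    (LJ : Matrix (Fin (2 * J + 1) × Fin n) (Fin (2 * J + 1) × Fin n) ℂ)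
    (hLJ : LJ = (blockToeplitz J n B0)⁻¹ *
      ((fourierD J n) ^ 2 + fourierD J n * blockToeplitz J n A1 + blockToeplitz J n A0)) :
    ∃ h : ∀ z : ℂ, AnalyticAt ℂ (DJ J n A1 A0 B0) z,
      ∀ z₀ : ℂ, analyticOrderAt (DJ J n A1 A0 B0) z₀ = ((LJ.charpoly.rootMultiplicity z₀ : ℕ) : ℕ∞) :=
  truncated_evans_analytic_and_multiplicity_general n J A1 A0 B0 hB LJ hLJ
end

section
/- Fix n ≥ 1, J ∈ ℕ, λ ∈ ℂ. Let A₁ be continuously differentiable and A₀, B₀ continuous, all Mₙ(ℂ)-valued and 2π-periodic, with Fourier coefficients Â₁,_m, Â₀,_m, B̂₀,_m (f̂_m = (1/2π)∫₀^{2π} f(x)e^{−imx}dx). Let 𝔸(λ,x) = [[0, Iₙ],[λB₀(x) − A₀(x) − A₁′(x), −A₁(x)]] with Fourier coefficients 𝔸̂_m(λ), and let 𝒦̂_J(λ) be the block matrix of size (2J+1)·2n indexed by j,k ∈ {−J,…,J} with (j,k) block (ij − 1)^{-1}(𝔸̂_{j−k}(λ) − δ_{jk}I_{2n}); set F_J(λ)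 := det(I − 𝒦̂_J(λ))·exp(tr 𝒦̂_J(λ)). With 𝒟_J, 𝒜₁,J, 𝒜₀,J, ℬ₀,J the size-(2J+1)n block matrices of the second-order problem (𝒟_J block diagonal with blocks ij·Iₙ; the others block Toeplitz with blocks Â₁,_{j−k}, Â₀,_{j−k}, B̂₀,_{j−k}), assume ℬ₀,J is invertible and set L_J := ℬ₀,J^{-1}(𝒟_J² + 𝒟_J𝒜₁,J + 𝒜₀,J). Then ( det(𝒟_J − I_{(2J+1)n}) )² · F_J(λ) = det(ℬ₀,J) · exp(tr 𝒦̂_J(λ)) · det(L_J − λ·I). -/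
/-!
Multiplying `1 - 𝒦̂_J(λ)` on the left by `diag(ij - 1)` gives `𝒟 - 𝔸̂`, the truncated Fourier
symbol of `∂ₓ - 𝔸(λ,·)`; on the doubled block index `diag(ij - 1)` has determinant
`det(𝒟_J - I)²`. Ordering the unknowns as `(U, Uₓ)` turns `𝒟 - 𝔸̂` into the block matrix
`[[𝒟, -I], [𝒜₀ + [𝒟, 𝒜₁] - λℬ₀, 𝒟 + 𝒜₁]]`, since by periodicity of `A₁` the Fourier coefficients
of `A₁'` are `im Â₁,ₘ`. Eliminating the `-I` block leaves
`det(𝒟² + 𝒟𝒜₁ + 𝒜₀ - λℬ₀) = det ℬ₀,J · det(L_J - λ)`.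
-/

open Complex Matrix

attribute [local instance] Matrix.normedAddCommGroup Matrix.normedSpace

/-- Entrywise Fourier coefficient of a matrix-valued `2π`-periodic function. -/
noncomputable def fc {k : Type*} (f : ℝ → Matrix k k ℂ) (m : ℤ) : Matrix k k ℂ :=
  fun i j => (2 * Real.pi : ℂ)⁻¹ *
    ∫ x in (0:ℝ)..(2 * Real.pi), f x i j * Complex.exp (-(Complex.I) * (m : ℂ) * x)

/-- The first-order coefficient matrix
`𝔸(λ,x) = [[0, I],[λB₀ − A₀ − A₁′, −A₁]]` of the periodic eigenvalue problem. -/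
noncomputable def firstOrderA {n : ℕ} (A1 A1' A0 B0 : ℝ → Matrix (Fin n) (Fin n) ℂ)
    (lam : ℂ) (x : ℝ) : Matrix (Fin n ⊕ Fin n) (Fin n ⊕ Fin n) ℂ :=
  Matrix.fromBlocks 0 1 (lam • B0 x - A0 x - A1' x) (-(A1 x))

/-- The truncated first-order Birman–Schwinger matrix `𝒦̂_J(λ)`, with `(j,k)` block
`(ij − 1)⁻¹ (𝔸̂_{j−k}(λ) − δ_{jk} I_{2n})`. -/
noncomputable def KhatJ {n : ℕ} (J : ℕ) (A1 A1' A0 B0 : ℝ → Matrix (Fin n) (Fin n) ℂ)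
    (lam : ℂ) :
    Matrix (Fin (2 * J + 1) × (Fin n ⊕ Fin n)) (Fin (2 * J + 1) × (Fin n ⊕ Fin n)) ℂ :=
  fun p q => (Complex.I * ((jv J p.1 : ℤ) : ℂ) - 1)⁻¹ *
    (fc (firstOrderA A1 A1' A0 B0 lam) (jv J p.1 - jv J q.1) p.2 q.2 -
      if p = q then 1 else 0)

open Real

theorem exp_neg_I_int_mul_two_pi (m : ℤ) : Complex.exp (-I * m * (2 * π : ℝ)) = 1 := by
  rw [← Complex.exp_int_mul_two_pi_mul_I (-m)]
  push_cast
  ring_nf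

theorem integral_deriv_mul_exp_eq {g g' : ℝ → ℂ} (hg : ∀ x, HasDerivAt g (g' x) x)
    (hg' : Continuous g') (hper : g (2 * π) = g 0) (m : ℤ) :
    ∫ x in (0:ℝ)..(2 * π), g' x * Complex.exp (-I * m * x) =
      I * m * ∫ x in (0:ℝ)..(2 * π), g x * Complex.exp (-I * m * x) := by
  have he : ∀ x : ℝ, HasDerivAt (fun y : ℝ => Complex.exp (-I * m * y))
      (Complex.exp (-I * m * x) * (-I * m)) x := fun x => by
    simpa using ((Complex.ofRealCLM.hasDerivAt (x := x)).const_mul (-I * m)).cexp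
  have parts := intervalIntegral.integral_mul_deriv_eq_deriv_mul (a := 0) (b := 2 * π)
    (fun x _ => he x) (fun x _ => hg x) (Continuous.intervalIntegrable (by fun_prop) _ _)
    (hg'.intervalIntegrable _ _)
  simp only [exp_neg_I_int_mul_two_pi, hper, Complex.ofReal_zero, mul_zero, Complex.exp_zero,
    sub_self, zero_sub] at parts
  simp_rw [mul_comm (g' _)]
  rw [parts, ← intervalIntegral.integral_const_mul, ← intervalIntegral.integral_neg]
  congr 1; ext x; ring

section FourierCoefficient

variable {k : Type*}

theorem fc_of_hasDerivAt [Fintype k] {f f' : ℝ → Matrix k k ℂ} (hf : ∀ x, HasDerivAt f (f' x) x)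
    (hf' : Continuous f') (hper : f (2 * π) = f 0) (m : ℤ) :
    fc f' m = (I * m) • fc f m := by
  ext i j
  have hij : ∀ x, HasDerivAt (fun y => f y i j) (f' x i j) x := fun x =>
    hasDerivAt_pi.1 (hasDerivAt_pi.1 (hf x) i) j
  have hc : Continuous fun x => f' x i j := (continuous_apply_apply i j).comp hf'
  simp only [fc, Matrix.smul_apply, smul_eq_mul,
    integral_deriv_mul_exp_eq hij hc (by rw [hper]) m]
  ring

theorem fc_const [DecidableEq k] (c : Matrix k k ℂ) (m : ℤ) :
    fc (fun _ => c) m = if m = 0 then c else 0 := by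
  split_ifs with hm
  · ext i j
    subst hm
    simp only [fc, Int.cast_zero, mul_zero, zero_mul, Complex.exp_zero, mul_one,
      intervalIntegral.integral_const, sub_zero, real_smul, ofReal_mul, ofReal_ofNat]
    exact inv_mul_cancel_left₀ (by simp [Real.pi_ne_zero]) _
  · ext i j
    have h := integral_deriv_mul_exp_eq (g := fun _ => c i j) (fun x => hasDerivAt_const x _)
      continuous_const rfl m
    have hIm : I * m ≠ 0 := by simpa [Complex.I_ne_zero] using hm
    simp only [zero_mul, intervalIntegral.integral_zero] at h
    simp only [fc, (mul_eq_zero.1 h.symm).resolve_left hIm, mul_zero, Matrix.zero_apply]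

theorem fc_neg (f : ℝ → Matrix k k ℂ) (m : ℤ) : fc (fun x => -f x) m = -fc f m := by
  ext i j
  simp [fc]

theorem fc_smul (c : ℂ) (f : ℝ → Matrix k k ℂ) (m : ℤ) :
    fc (fun x => c • f x) m = c • fc f m := by
  ext i j
  simp only [fc, Matrix.smul_apply, smul_eq_mul, mul_assoc, intervalIntegral.integral_const_mul]
  ring

theorem fc_sub {f g : ℝ → Matrix k k ℂ} (hf : Continuous f) (hg : Continuous g) (m : ℤ) :
    fc (fun x => f x - g x) m = fc f m - fc g m := by
  ext i j
  have hfij := (continuous_apply_apply i j).comp hf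
  have hgij := (continuous_apply_apply i j).comp hg
  simp only [fc, Matrix.sub_apply, sub_mul]
  rw [intervalIntegral.integral_sub (Continuous.intervalIntegrable (by fun_prop) _ _)
    (Continuous.intervalIntegrable (by fun_prop) _ _), mul_sub]

theorem fc_fromBlocks (A B C D : ℝ → Matrix k k ℂ) (m : ℤ) :
    fc (fun x => Matrix.fromBlocks (A x) (B x) (C x) (D x)) m =
      Matrix.fromBlocks (fc A m) (fc B m) (fc C m) (fc D m) := by
  ext (i | i) (j | j) <;> rfl

end FourierCoefficient

theorem jv_injective (J : ℕ) : Function.Injective (jv J) := fun a b h => by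
  unfold jv at h
  omega

section TruncatedBlockToeplitz

variable {R k l : Type*} (J : ℕ)

def truncBlockToeplitz (A : ℤ → Matrix k l R) :
    Matrix (Fin (2 * J + 1) × k) (Fin (2 * J + 1) × l) R :=
  fun p q => A (jv J p.1 - jv J q.1) p.2 q.2

noncomputable def fourierDiag (k : Type*) [DecidableEq k] :
    Matrix (Fin (2 * J + 1) × k) (Fin (2 * J + 1) × k) ℂ :=
  Matrix.diagonal fun p => I * (jv J p.1 : ℂ)

theorem blockToeplitz_eq_truncBlockToeplitz (n : ℕ) (A : ℤ → Matrix (Fin n) (Fin n) ℂ) :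
    blockToeplitz J n A = truncBlockToeplitz J A := rfl

theorem fourierD_eq_fourierDiag (n : ℕ) : fourierD J n = fourierDiag J (Fin n) := rfl

@[simp]
theorem truncBlockToeplitz_zero [Zero R] :
    truncBlockToeplitz J (fun _ => (0 : Matrix k l R)) = 0 := rfl

@[simp]
theorem truncBlockToeplitz_neg [Neg R] (A : ℤ → Matrix k l R) :
    truncBlockToeplitz J (fun m => -A m) = -truncBlockToeplitz J A := rfl

@[simp]
theorem truncBlockToeplitz_sub [Sub R] (A B : ℤ → Matrix k l R) :
    truncBlockToeplitz J (fun m => A m - B m) = truncBlockToeplitz J A - truncBlockToeplitz J B :=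
  rfl

@[simp]
theorem truncBlockToeplitz_smul {S : Type*} [SMul S R] (c : S) (A : ℤ → Matrix k l R) :
    truncBlockToeplitz J (fun m => c • A m) = c • truncBlockToeplitz J A := rfl

theorem truncBlockToeplitz_ite_one [DecidableEq k] [Zero R] [One R] :
    truncBlockToeplitz J (fun m => if m = 0 then (1 : Matrix k k R) else 0) = 1 := by
  ext ⟨a, i⟩ ⟨b, j⟩
  simp only [truncBlockToeplitz, Matrix.one_apply, Prod.mk.injEq, sub_eq_zero,
    (jv_injective J).eq_iff]
  split_ifs <;> simp_all [Matrix.one_apply]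

theorem truncBlockToeplitz_I_mul_smul [Fintype k] [DecidableEq k] (A : ℤ → Matrix k k ℂ) :
    truncBlockToeplitz J (fun m => (I * m) • A m) =
      fourierDiag J k * truncBlockToeplitz J A - truncBlockToeplitz J A * fourierDiag J k := by
  ext p q
  simp only [truncBlockToeplitz, fourierDiag, Matrix.smul_apply, smul_eq_mul, Matrix.sub_apply,
    Matrix.diagonal_mul, Matrix.mul_diagonal]
  push_cast
  ring

theorem truncBlockToeplitz_fromBlocks_submatrix {k' l' : Type*} (A : ℤ → Matrix k l R)
    (B : ℤ → Matrix k l' R) (C : ℤ → Matrix k' l R) (D : ℤ → Matrix k' l' R) :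
    (truncBlockToeplitz J fun m => Matrix.fromBlocks (A m) (B m) (C m) (D m)).submatrix
        (Equiv.prodSumDistrib _ k k').symm (Equiv.prodSumDistrib _ l l').symm =
      Matrix.fromBlocks (truncBlockToeplitz J A) (truncBlockToeplitz J B)
        (truncBlockToeplitz J C) (truncBlockToeplitz J D) := by
  ext (⟨a, i⟩ | ⟨a, i⟩) (⟨b, j⟩ | ⟨b, j⟩) <;> rfl

theorem fourierDiag_sum_submatrix [DecidableEq k] [DecidableEq l] :
    (fourierDiag J (k ⊕ l)).submatrix (Equiv.prodSumDistrib _ k l).symm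
        (Equiv.prodSumDistrib _ k l).symm =
      Matrix.fromBlocks (fourierDiag J k) 0 0 (fourierDiag J l) := by
  rw [fourierDiag, fourierDiag, fourierDiag, Matrix.submatrix_diagonal_equiv,
    Matrix.fromBlocks_diagonal]
  congr 1
  ext (⟨a, i⟩ | ⟨a, i⟩) <;> rfl

theorem det_fourierDiag_sub_one_sum [Fintype k] [DecidableEq k] :
    (fourierDiag J (k ⊕ k) - 1).det = (fourierDiag J k - 1).det ^ 2 := by
  rw [← Matrix.det_submatrix_equiv_self (Equiv.prodSumDistrib _ k k).symm,
    Matrix.submatrix_sub, Pi.sub_apply, Pi.sub_apply, fourierDiag_sum_submatrix,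
    Matrix.submatrix_one_equiv, ← Matrix.fromBlocks_one, sub_eq_add_neg, Matrix.fromBlocks_neg,
    Matrix.fromBlocks_add, neg_zero, add_zero, Matrix.det_fromBlocks_zero₁₂, ← sub_eq_add_neg, sq]

end TruncatedBlockToeplitz

theorem Matrix.det_fromBlocks_neg_one₁₂ {R m : Type*} [CommRing R] [Fintype m] [DecidableEq m]
    (A C D : Matrix m m R) : (Matrix.fromBlocks A (-1) C D).det = (C + D * A).det := by
  have unimodular : (Matrix.fromBlocks 1 1 (A - 1) A).det = 1 := by
    rw [Matrix.det_fromBlocks_one₁₁, Matrix.mul_one, sub_sub_cancel, Matrix.det_one]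
  have product : Matrix.fromBlocks A (-1) C D * Matrix.fromBlocks 1 1 (A - 1) A =
      Matrix.fromBlocks 1 0 (C + D * (A - 1)) (C + D * A) := by
    rw [Matrix.fromBlocks_multiply]
    congr 1 <;> noncomm_ring
  rw [← mul_one (Matrix.fromBlocks A (-1) C D).det, ← unimodular, ← Matrix.det_mul, product,
    Matrix.det_fromBlocks_zero₁₂, Matrix.det_one, one_mul]

theorem I_mul_intCast_sub_one_ne_zero (m : ℤ) : I * m - 1 ≠ 0 := fun h => by
  simpa using congrArg Complex.re h

section FirstOrder

variable {n : ℕ} (J : ℕ) (A1 A1' A0 B0 : ℝ → Matrix (Fin n) (Fin n) ℂ) (lam : ℂ)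

theorem fourierDiag_sub_one_mul_one_sub_KhatJ :
    (fourierDiag J (Fin n ⊕ Fin n) - 1) * (1 - KhatJ J A1 A1' A0 B0 lam) =
      fourierDiag J _ - truncBlockToeplitz J (fc (firstOrderA A1 A1' A0 B0 lam)) := by
  rw [fourierDiag, ← Matrix.diagonal_one, Matrix.diagonal_sub]
  ext p q
  have hp := I_mul_intCast_sub_one_ne_zero (jv J p.1)
  simp only [Matrix.diagonal_mul, Matrix.sub_apply, Matrix.diagonal_apply, KhatJ,
    truncBlockToeplitz]
  field_simp
  split_ifs <;> ring

theorem fc_firstOrderA (hA1 : ∀ x, HasDerivAt A1 (A1' x) x) (hA1' : Continuous A1')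
    (hA0 : Continuous A0) (hB0 : Continuous B0) (hA1per : A1 (2 * π) = A1 0) (m : ℤ) :
    fc (firstOrderA A1 A1' A0 B0 lam) m =
      Matrix.fromBlocks 0 (if m = 0 then 1 else 0)
        (lam • fc B0 m - fc A0 m - (I * m) • fc A1 m) (-fc A1 m) := by
  unfold firstOrderA
  rw [fc_fromBlocks, fc_const, fc_const, ite_self, fc_sub (by fun_prop) hA1',
    fc_sub (by fun_prop) hA0, fc_smul, fc_neg, fc_of_hasDerivAt hA1 hA1' hA1per]

theorem det_fourierDiag_sub_truncBlockToeplitz_fc_firstOrderA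
    (hA1 : ∀ x, HasDerivAt A1 (A1' x) x) (hA1' : Continuous A1')
    (hA0 : Continuous A0) (hB0 : Continuous B0) (hA1per : A1 (2 * π) = A1 0) :
    (fourierDiag J _ - truncBlockToeplitz J (fc (firstOrderA A1 A1' A0 B0 lam))).det =
      (fourierD J n ^ 2 + fourierD J n * blockToeplitz J n (fc A1) + blockToeplitz J n (fc A0) -
        lam • blockToeplitz J n (fc B0)).det := by
  rw [fourierD_eq_fourierDiag, blockToeplitz_eq_truncBlockToeplitz,
    blockToeplitz_eq_truncBlockToeplitz, blockToeplitz_eq_truncBlockToeplitz]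
  have blocks :
      (fourierDiag J _ - truncBlockToeplitz J (fc (firstOrderA A1 A1' A0 B0 lam))).submatrix
        (Equiv.prodSumDistrib _ _ _).symm (Equiv.prodSumDistrib _ _ _).symm =
      Matrix.fromBlocks (fourierDiag J (Fin n)) (-1)
        (truncBlockToeplitz J (fc A0) + fourierDiag J _ * truncBlockToeplitz J (fc A1) -
          truncBlockToeplitz J (fc A1) * fourierDiag J _ - lam • truncBlockToeplitz J (fc B0))
        (fourierDiag J _ + truncBlockToeplitz J (fc A1)) := by
    rw [Matrix.submatrix_sub, Pi.sub_apply, Pi.sub_apply, fourierDiag_sum_submatrix,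
      funext (fc_firstOrderA A1 A1' A0 B0 lam hA1 hA1' hA0 hB0 hA1per),
      truncBlockToeplitz_fromBlocks_submatrix]
    simp only [truncBlockToeplitz_zero, truncBlockToeplitz_sub, truncBlockToeplitz_smul,
      truncBlockToeplitz_neg, truncBlockToeplitz_I_mul_smul, truncBlockToeplitz_ite_one]
    rw [sub_eq_add_neg, Matrix.fromBlocks_neg, Matrix.fromBlocks_add]
    congr 1 <;> abel
  rw [← Matrix.det_submatrix_equiv_self (Equiv.prodSumDistrib _ _ _).symm, blocks,
    Matrix.det_fromBlocks_neg_one₁₂]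
  congr 1
  noncomm_ring

end FirstOrder

theorem first_order_truncated_evans_factorization_general
    (n : ℕ) (J : ℕ) (lam : ℂ)
    (A1 A1' A0 B0 : ℝ → Matrix (Fin n) (Fin n) ℂ)
    (hA1 : ∀ x : ℝ, HasDerivAt A1 (A1' x) x) (hA1' : Continuous A1')
    (hA0 : Continuous A0) (hB0 : Continuous B0)
    (hA1per : ∀ x : ℝ, A1 (x + 2 * Real.pi) = A1 x)
    (hB : IsUnit (blockToeplitz J n (fc B0)))
    (LJ : Matrix (Fin (2 * J + 1) × Fin n) (Fin (2 * J + 1) × Fin n) ℂ)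
    (hLJ : LJ = (blockToeplitz J n (fc B0))⁻¹ *
      ((fourierD J n) ^ 2 + fourierD J n * blockToeplitz J n (fc A1) +
        blockToeplitz J n (fc A0))) :
    (fourierD J n - 1).det ^ 2 *
        ((1 - KhatJ J A1 A1' A0 B0 lam).det *
          Complex.exp ((KhatJ J A1 A1' A0 B0 lam).trace)) =
      (blockToeplitz J n (fc B0)).det *
        Complex.exp ((KhatJ J A1 A1' A0 B0 lam).trace) * (LJ - lam • 1).det := by
  have secondOrder : blockToeplitz J n (fc B0) * (LJ - lam • 1) =
      fourierD J n ^ 2 + fourierD J n * blockToeplitz J n (fc A1) + blockToeplitz J n (fc A0) -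
        lam • blockToeplitz J n (fc B0) := by
    rw [hLJ, Matrix.mul_sub, ← Matrix.mul_assoc, Matrix.mul_nonsing_inv _
      ((Matrix.isUnit_iff_isUnit_det _).mp hB), Matrix.one_mul, Matrix.mul_smul, Matrix.mul_one]
  calc (fourierD J n - 1).det ^ 2 *
        ((1 - KhatJ J A1 A1' A0 B0 lam).det * exp (KhatJ J A1 A1' A0 B0 lam).trace)
      = ((fourierDiag J _ - 1) * (1 - KhatJ J A1 A1' A0 B0 lam)).det *
          exp (KhatJ J A1 A1' A0 B0 lam).trace := by
        rw [Matrix.det_mul, det_fourierDiag_sub_one_sum, fourierD_eq_fourierDiag]; ring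
    _ = (blockToeplitz J n (fc B0) * (LJ - lam • 1)).det *
          exp (KhatJ J A1 A1' A0 B0 lam).trace := by
        rw [fourierDiag_sub_one_mul_one_sub_KhatJ, secondOrder,
          det_fourierDiag_sub_truncBlockToeplitz_fc_firstOrderA J A1 A1' A0 B0 lam hA1 hA1' hA0
            hB0 (by simpa using hA1per 0)]
    _ = (blockToeplitz J n (fc B0)).det * exp (KhatJ J A1 A1' A0 B0 lam).trace *
          (LJ - lam • 1).det := by
        rw [Matrix.det_mul]; ring

/-- The truncated first-order Birman–Schwinger Evans function
`F_J(λ) = det(I − 𝒦̂_J(λ)) e^{tr 𝒦̂_J(λ)}` satisfies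
`det(𝒟_J − I)² F_J(λ) = det ℬ₀,J · e^{tr 𝒦̂_J(λ)} · det(L_J − λ)`. -/
theorem first_order_truncated_evans_factorization
    (n : ℕ) (hn : 1 ≤ n) (J : ℕ) (lam : ℂ)
    (A1 A1' A0 B0 : ℝ → Matrix (Fin n) (Fin n) ℂ)
    (hA1 : ∀ x : ℝ, HasDerivAt A1 (A1' x) x) (hA1' : Continuous A1')
    (hA0 : Continuous A0) (hB0 : Continuous B0)
    (hA1per : ∀ x : ℝ, A1 (x + 2 * Real.pi) = A1 x)
    (hA0per : ∀ x : ℝ, A0 (x + 2 * Real.pi) = A0 x)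
    (hB0per : ∀ x : ℝ, B0 (x + 2 * Real.pi) = B0 x)
    (hB : IsUnit (blockToeplitz J n (fc B0)))
    (LJ : Matrix (Fin (2 * J + 1) × Fin n) (Fin (2 * J + 1) × Fin n) ℂ)
    (hLJ : LJ = (blockToeplitz J n (fc B0))⁻¹ *
      ((fourierD J n) ^ 2 + fourierD J n * blockToeplitz J n (fc A1) +
        blockToeplitz J n (fc A0))) :
    (fourierD J n - 1).det ^ 2 *
        ((1 - KhatJ J A1 A1' A0 B0 lam).det *
          Complex.exp ((KhatJ J A1 A1' A0 B0 lam).trace)) =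
      (blockToeplitz J n (fc B0)).det *
        Complex.exp ((KhatJ J A1 A1' A0 B0 lam).trace) * (LJ - lam • 1).det :=
  first_order_truncated_evans_factorization_general n J lam A1 A1' A0 B0 hA1 hA1' hA0 hB0 hA1per hB
    LJ hLJ
end
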